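/- arXiv:1809.05569 — 2 statements merged into one kernel-verified Lean document; each statement's English description precedes it below -/
import Mathlib

section
/- Let x be an automorphism of prime order p of a finite generalized quadrangle Q of order (s,t), and assume that x fixes no point and fixes no line. Then either (p divides s+1 and p divides t+1) or p divides st+1. Moreover, if p is odd, then (p divides s+1 and p divides t+1) holds if and only if p does not divide st+1. -/
/-- `IsGQ I s t` : the incidence relation `I` between the (finite) point type `P`
and line type `L` is a finite generalized quadrangle of order `(s,t)`. -/
structure IsGQ {P L : Type*} (I : P → L → Prop) (s t : ℕ) : Prop where
  finP : Finite P
  finL : Finite L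
  s_pos : 0 < s
  t_pos : 0 < t
  line_pts : ∀ ℓ : L, Nat.card {p : P // I p ℓ} = s + 1
  pt_lines : ∀ p : P, Nat.card {ℓ : L // I p ℓ} = t + 1
  unique_line : ∀ p q : P, p ≠ q → Nat.card {ℓ : L // I p ℓ ∧ I q ℓ} ≤ 1
  gq_axiom : ∀ (p : P) (ℓ : L), ¬ I p ℓ →
      ∃! pl : P × L, I p pl.2 ∧ I pl.1 pl.2 ∧ I pl.1 ℓ

/-- An automorphism of the incidence structure `I` : a pair of permutations of the
points and of the lines preserving incidence. -/
@[ext] structure GQAut {P L : Type*} (I : P → L → Prop) where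
  permP : Equiv.Perm P
  permL : Equiv.Perm L
  pres : ∀ p ℓ, I (permP p) (permL ℓ) ↔ I p ℓ

namespace GQAut

variable {P L : Type*} {I : P → L → Prop}

instance : Group (GQAut I) where
  mul x y := ⟨x.permP * y.permP, x.permL * y.permL, by
    intro p ℓ
    simp only [Equiv.Perm.mul_apply]
    rw [x.pres, y.pres]⟩
  one := ⟨1, 1, fun p ℓ => Iff.rfl⟩
  inv x := ⟨x.permP⁻¹, x.permL⁻¹, by
    intro p ℓ
    simpa using (x.pres (x.permP⁻¹ p) (x.permL⁻¹ ℓ)).symm⟩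
  mul_assoc a b c := by ext <;> rfl
  one_mul a := by ext <;> rfl
  mul_one a := by ext <;> rfl
  inv_mul_cancel a := by
    ext z
    · show a.permP⁻¹ (a.permP z) = z
      simp
    · show a.permL⁻¹ (a.permL z) = z
      simp

end GQAut

/-- Two points are collinear if some line is incident with both. -/
def Collin {P L : Type*} (I : P → L → Prop) (p q : P) : Prop := ∃ ℓ, I p ℓ ∧ I q ℓ

/-- Two lines are concurrent if some point is incident with both. -/
def Concur {P L : Type*} (I : P → L → Prop) (ℓ m : L) : Prop := ∃ p, I p ℓ ∧ I p m

/-- Number of points fixed by the automorphism `x`. -/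
noncomputable def alpha0 {P L : Type*} {I : P → L → Prop} (x : GQAut I) : ℕ :=
  Nat.card {p : P // x.permP p = p}

/-- Number of points moved by `x` to a distinct collinear point. -/
noncomputable def alpha1 {P L : Type*} {I : P → L → Prop} (x : GQAut I) : ℕ :=
  Nat.card {p : P // x.permP p ≠ p ∧ Collin I p (x.permP p)}

/-- Number of points sent by `x` to a noncollinear point. -/
noncomputable def alpha2 {P L : Type*} {I : P → L → Prop} (x : GQAut I) : ℕ :=
  Nat.card {p : P // ¬ Collin I p (x.permP p)}

/-- Number of lines fixed by the automorphism `x`. -/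
noncomputable def beta0 {P L : Type*} {I : P → L → Prop} (x : GQAut I) : ℕ :=
  Nat.card {ℓ : L // x.permL ℓ = ℓ}

/-- Number of lines moved by `x` to a distinct concurrent line. -/
noncomputable def beta1 {P L : Type*} {I : P → L → Prop} (x : GQAut I) : ℕ :=
  Nat.card {ℓ : L // x.permL ℓ ≠ ℓ ∧ Concur I ℓ (x.permL ℓ)}

/-- Number of lines sent by `x` to a nonconcurrent line. -/
noncomputable def beta2 {P L : Type*} {I : P → L → Prop} (x : GQAut I) : ℕ :=
  Nat.card {ℓ : L // ¬ Concur I ℓ (x.permL ℓ)}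

/-- The automorphism group is transitive on points. -/
def PointTransitive {P L : Type*} (I : P → L → Prop) : Prop :=
  ∀ p q : P, ∃ x : GQAut I, x.permP p = q

/-- The automorphism group is transitive on lines. -/
def LineTransitive {P L : Type*} (I : P → L → Prop) : Prop :=
  ∀ ℓ m : L, ∃ x : GQAut I, x.permL ℓ = m

/-- The fixed substructure of `x` has type (2): there is a fixed point `P₀` collinear
with every fixed point, at least one line is fixed, and every fixed line passes through `P₀`. -/
def FixedType2 {P L : Type*} (I : P → L → Prop) (x : GQAut I) : Prop :=
  ∃ P₀ : P, x.permP P₀ = P₀ ∧ (∀ p, x.permP p = p → Collin I P₀ p) ∧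
    (∃ ℓ, x.permL ℓ = ℓ) ∧ (∀ ℓ, x.permL ℓ = ℓ → I P₀ ℓ)

/-- The fixed substructure of `x` has type (2'): there is a fixed line `ℓ₀` concurrent
with every fixed line, at least one point is fixed, and every fixed point lies on `ℓ₀`. -/
def FixedType2' {P L : Type*} (I : P → L → Prop) (x : GQAut I) : Prop :=
  ∃ ℓ₀ : L, x.permL ℓ₀ = ℓ₀ ∧ (∀ ℓ, x.permL ℓ = ℓ → Concur I ℓ₀ ℓ) ∧
    (∃ p, x.permP p = p) ∧ (∀ p, x.permP p = p → I p ℓ₀)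

/-- The fixed substructure of `x` (fixed points and fixed lines with induced incidence)
is a generalized subquadrangle of order `(s', t')`. -/
def FixedSubGQ {P L : Type*} (I : P → L → Prop) (x : GQAut I) (s' t' : ℕ) : Prop :=
  IsGQ (fun (p : {p : P // x.permP p = p}) (ℓ : {ℓ : L // x.permL ℓ = ℓ}) => I p.1 ℓ.1) s' t'

/-!
A fixed-point-free automorphism of prime order `p` has all its orbits, on points and on lines,
of size `p`, so `p` divides `|P| = (s+1)(st+1)` and `|L| = (t+1)(st+1)`; the point count comes
from projecting every point off a line `ℓ` onto `ℓ` (GQ axiom), and the line count is its dual.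
If `p ∤ st+1` this forces `p ∣ s+1` and `p ∣ t+1`. If `p` divides all three, then
`st+1 ≡ (-1)(-1)+1 = 2 (mod p)`, so `p = 2`.
-/

theorem Equiv.Perm.prime_dvd_card_of_pow_eq_one {α : Type*} [Finite α] {p : ℕ} [Fact p.Prime]
    {σ : Equiv.Perm α} (hσ : σ ^ p = 1) (hfree : ∀ a, σ a ≠ a) : p ∣ Nat.card α := by
  have := Fintype.ofFinite α
  rw [Nat.card_eq_fintype_card]
  by_contra hα
  obtain ⟨a, ha⟩ := Equiv.Perm.exists_fixed_point_of_prime (n := 1) hα (by rwa [pow_one])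
  exact hfree a ha

namespace GQAut

variable {P L : Type*} {I : P → L → Prop}

def toPermP : GQAut I →* Equiv.Perm P where
  toFun := permP
  map_one' := rfl
  map_mul' _ _ := rfl

def toPermL : GQAut I →* Equiv.Perm L where
  toFun := permL
  map_one' := rfl
  map_mul' _ _ := rfl

theorem permP_pow (x : GQAut I) (n : ℕ) : (x ^ n).permP = x.permP ^ n :=
  map_pow toPermP x n

theorem permL_pow (x : GQAut I) (n : ℕ) : (x ^ n).permL = x.permL ^ n :=
  map_pow toPermL x n

end GQAut

namespace IsGQ

variable {P L : Type*} {I : P → L → Prop} {s t : ℕ}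

theorem eq_of_incident_of_incident (h : IsGQ I s t) {q r : P} {ℓ m : L} (hqr : q ≠ r)
    (hqℓ : I q ℓ) (hrℓ : I r ℓ) (hqm : I q m) (hrm : I r m) : ℓ = m := by
  have := h.finL
  have := Finite.card_le_one_iff_subsingleton.mp (h.unique_line q r hqr)
  exact congrArg Subtype.val
    (Subsingleton.elim (⟨ℓ, hqℓ, hrℓ⟩ : {n // I q n ∧ I r n}) ⟨m, hqm, hrm⟩)

theorem dual (h : IsGQ I s t) : IsGQ (fun (ℓ : L) (q : P) => I q ℓ) t s where
  finP := h.finL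
  finL := h.finP
  s_pos := h.t_pos
  t_pos := h.s_pos
  line_pts := h.pt_lines
  pt_lines := h.line_pts
  unique_line ℓ m hℓm := by
    have := h.finP
    refine Finite.card_le_one_iff_subsingleton.mpr ⟨fun q r => Subtype.ext ?_⟩
    by_contra hqr
    exact hℓm (h.eq_of_incident_of_incident hqr q.2.1 r.2.1 q.2.2 r.2.2)
  gq_axiom ℓ q hq :=
    ((Equiv.prodComm P L).existsUnique_congr fun _ => by
      simp only [Equiv.prodComm_apply, Prod.fst_swap, Prod.snd_swap]; tauto).mp (h.gq_axiom q ℓ hq)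

theorem nonempty_lines (h : IsGQ I s t) [Nonempty P] : Nonempty L := by
  obtain ⟨q⟩ := ‹Nonempty P›
  have := h.finL
  obtain ⟨⟨ℓ, -⟩⟩ := (Nat.card_pos_iff.mp (by rw [h.pt_lines q]; exact t.succ_pos)).1
  exact ⟨ℓ⟩

theorem nonempty_of_ne_one (h : IsGQ I s t) {x : GQAut I} (hx : x ≠ 1) : Nonempty P := by
  by_contra hP
  have : IsEmpty P := not_nonempty_iff.mp hP
  have : IsEmpty L := not_nonempty_iff.mp fun _ => hP h.dual.nonempty_lines
  exact hx (GQAut.ext (Subsingleton.elim _ _) (Subsingleton.elim _ _))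

theorem card_incident_ne (h : IsGQ I s t) {r : P} {m : L} (hr : I r m) :
    Nat.card {q // I q m ∧ q ≠ r} = s := by
  have := h.finP
  have key := Set.ncard_sdiff_singleton_add_one (s := {q | I q m}) hr
  rw [← Nat.card_coe_set_eq, ← Nat.card_coe_set_eq, Set.coe_ofPred, h.line_pts m] at key
  exact Nat.add_right_cancel key

theorem card_lines_ne (h : IsGQ I s t) {r : P} {ℓ : L} (hr : I r ℓ) :
    Nat.card {m // I r m ∧ m ≠ ℓ} = t :=
  h.dual.card_incident_ne hr

theorem not_incident_of_incident_ne (h : IsGQ I s t) {q r : P} {ℓ m : L} (hrℓ : I r ℓ)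
    (hrm : I r m) (hmℓ : m ≠ ℓ) (hqm : I q m) (hqr : q ≠ r) : ¬ I q ℓ := fun hqℓ =>
  hmℓ (h.eq_of_incident_of_incident hqr hqm hrm hqℓ hrℓ)

theorem card_not_incident (h : IsGQ I s t) (ℓ : L) :
    Nat.card {q // ¬ I q ℓ} = (s + 1) * (t * s) := by
  classical
  have := h.finP
  have := h.finL
  have := Fintype.ofFinite P
  have := Fintype.ofFinite L
  -- a point off `ℓ` is determined by its projection `r` onto `ℓ` and the line `m` joining them
  let proj : (Σ r : {r // I r ℓ}, Σ m : {m // I r.1 m ∧ m ≠ ℓ}, {q // I q m.1 ∧ q ≠ r.1}) →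
      {q // ¬ I q ℓ} := fun ⟨r, m, q⟩ =>
    ⟨q.1, h.not_incident_of_incident_ne r.2 m.2.1 m.2.2 q.2.1 q.2.2⟩
  have hproj : Function.Bijective proj := by
    constructor
    · rintro ⟨⟨r, hr⟩, ⟨m, hrm, hm⟩, ⟨q, hqm, hqr⟩⟩ ⟨⟨r', hr'⟩, ⟨m', hrm', _⟩, ⟨q', hqm', _⟩⟩ hqq'
      obtain rfl : q = q' := congrArg Subtype.val hqq'
      obtain ⟨rfl, rfl⟩ : r = r' ∧ m = m' := Prod.mk.inj <|
        (h.gq_axiom q ℓ (h.not_incident_of_incident_ne hr hrm hm hqm hqr)).unique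
          (y₁ := (r, m)) ⟨hqm, hrm, hr⟩ ⟨hqm', hrm', hr'⟩
      rfl
    · rintro ⟨q, hq⟩
      obtain ⟨⟨r, m⟩, ⟨hqm, hrm, hr⟩, -⟩ := h.gq_axiom q ℓ hq
      exact ⟨⟨⟨r, hr⟩, ⟨m, hrm, fun hmℓ => hq (hmℓ ▸ hqm)⟩, ⟨q, hqm, fun hqr => hq (hqr ▸ hr)⟩⟩,
        rfl⟩
  have hfibre (r : {r // I r ℓ}) :
      Nat.card (Σ m : {m // I r.1 m ∧ m ≠ ℓ}, {q // I q m.1 ∧ q ≠ r.1}) = t * s := by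
    rw [Nat.card_sigma, Finset.sum_const_nat fun m _ => h.card_incident_ne m.2.1,
      Finset.card_univ, ← Nat.card_eq_fintype_card, h.card_lines_ne r.2]
  rw [← Nat.card_congr (Equiv.ofBijective proj hproj), Nat.card_sigma,
    Finset.sum_const_nat fun r _ => hfibre r, Finset.card_univ, ← Nat.card_eq_fintype_card,
    h.line_pts]

theorem card_points (h : IsGQ I s t) [Nonempty L] : Nat.card P = (s + 1) * (s * t + 1) := by
  classical
  obtain ⟨ℓ⟩ := ‹Nonempty L›
  have := h.finP
  rw [← Nat.card_congr (Equiv.sumCompl fun q => I q ℓ), Nat.card_sum, h.line_pts,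
    h.card_not_incident]
  ring

theorem card_lines (h : IsGQ I s t) [Nonempty P] : Nat.card L = (t + 1) * (s * t + 1) := by
  rw [h.dual.card_points, mul_comm t s]

end IsGQ

theorem Nat.dvd_two_of_dvd_add_one_of_dvd_mul_add_one {p s t : ℕ} (hs : p ∣ s + 1)
    (ht : p ∣ t + 1) (hst : p ∣ s * t + 1) : p ∣ 2 := by
  have key : (s + 1) * (t + 1) + 2 = (s * t + 1) + (s + 1) + (t + 1) := by ring
  exact (Nat.dvd_add_right (dvd_mul_of_dvd_left hs _)).mp (key ▸ (hst.add hs).add ht)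

/-- If an automorphism x of prime order p of a GQ of order (s,t)
fixes no point and no line, then (p ∣ s+1 and p ∣ t+1) or p ∣ st+1; and if p is
odd then (p ∣ s+1 and p ∣ t+1) holds iff p does not divide st+1. -/
theorem statement7 {P L : Type*} (I : P → L → Prop) (s t : ℕ)
    (hGQ : IsGQ I s t) (p : ℕ) (hp : p.Prime) (x : GQAut I) (hx : orderOf x = p)
    (hnoP : ∀ q : P, x.permP q ≠ q) (hnoL : ∀ ℓ : L, x.permL ℓ ≠ ℓ) :
    ((p ∣ s + 1 ∧ p ∣ t + 1) ∨ p ∣ s * t + 1) ∧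
    (Odd p → ((p ∣ s + 1 ∧ p ∣ t + 1) ↔ ¬ p ∣ s * t + 1)) := by
  have := hGQ.finP
  have := hGQ.finL
  have := Fact.mk hp
  have hxp : x ^ p = 1 := hx ▸ pow_orderOf_eq_one x
  have : Nonempty P := hGQ.nonempty_of_ne_one fun h1 : x = 1 =>
    hp.ne_one (by rw [← hx, h1, orderOf_one])
  have := hGQ.nonempty_lines
  have hdvdP : p ∣ (s + 1) * (s * t + 1) := hGQ.card_points ▸
    Equiv.Perm.prime_dvd_card_of_pow_eq_one (by rw [← GQAut.permP_pow, hxp]; rfl) hnoP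
  have hdvdL : p ∣ (t + 1) * (s * t + 1) := hGQ.card_lines ▸
    Equiv.Perm.prime_dvd_card_of_pow_eq_one (by rw [← GQAut.permL_pow, hxp]; rfl) hnoL
  have hdich : (p ∣ s + 1 ∧ p ∣ t + 1) ∨ p ∣ s * t + 1 := or_iff_not_imp_right.mpr fun hst =>
    ⟨(hp.dvd_mul.mp hdvdP).resolve_right hst, (hp.dvd_mul.mp hdvdL).resolve_right hst⟩
  refine ⟨hdich, fun hodd => ⟨fun ⟨hs, ht⟩ hst => ?_, hdich.resolve_right⟩⟩
  obtain rfl := (Nat.prime_dvd_prime_iff_eq hp Nat.prime_two).mp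
    (Nat.dvd_two_of_dvd_add_one_of_dvd_mul_add_one hs ht hst)
  exact Nat.not_odd_iff_even.mpr even_two hodd
end

section
/- Let x be an automorphism of prime order p of a finite generalized quadrangle Q of order (s,t). If the fixed substructure of x has type (2), then α₀(x) ≡ 1 + s·β₀(x) (mod p). If the fixed substructure of x has type (2'), then β₀(x) ≡ 1 + t·α₀(x) (mod p). -/
section AuxLemmas

lemma GQAut.permP_pow_s10 {P L : Type*} {I : P → L → Prop} (x : GQAut I) (n : ℕ) :
    (x ^ n).permP = x.permP ^ n := by
  induction n with
  | zero => rfl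
  | succ n ih => rw [pow_succ, pow_succ, ← ih]; rfl

lemma GQAut.permL_pow_s10 {P L : Type*} {I : P → L → Prop} (x : GQAut I) (n : ℕ) :
    (x ^ n).permL = x.permL ^ n := by
  induction n with
  | zero => rfl
  | succ n ih => rw [pow_succ, pow_succ, ← ih]; rfl

/-- Counting a subtype by removing one distinguished element. -/
lemma card_subtype_succ {α : Type*} [Finite α] (Q : α → Prop) (a₀ : α) (h : Q a₀) :
    Nat.card {a // Q a} = Nat.card {a // Q a ∧ a ≠ a₀} + 1 := by
  classical
  haveI : Unique {s : {a // Q a} // ¬ s.1 ≠ a₀} :=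
    ⟨⟨⟨⟨a₀, h⟩, by simp⟩⟩, fun s => Subtype.ext (Subtype.ext (not_not.mp s.2))⟩
  have e : {a // Q a} ≃ {a // Q a ∧ a ≠ a₀} ⊕ Unit :=
    (Equiv.sumCompl (fun s : {a // Q a} => s.1 ≠ a₀)).symm.trans
      (Equiv.sumCongr (Equiv.subtypeSubtypeEquivSubtypeInter Q (· ≠ a₀))
        (Equiv.equivPUnit _))
  rw [Nat.card_congr e, Nat.card_sum]
  simp

/-- For a permutation of prime power order `p` (i.e. `f ^ p = 1`) on a finite type,
the cardinality of the type is congruent mod `p` to the number of fixed points. -/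
lemma perm_card_fixed_modEq {α : Type*} [Finite α] (f : Equiv.Perm α) (p : ℕ)
    (hp : p.Prime) (hf : f ^ p = 1) :
    (Nat.card α : ℤ) ≡ (Nat.card {a : α // f a = a} : ℤ) [ZMOD (p : ℤ)] := by
  haveI : Fact p.Prime := ⟨hp⟩
  set G := Subgroup.zpowers f with hG
  have hPG : IsPGroup p G := by
    intro g
    refine ⟨1, ?_⟩
    obtain ⟨n, hn⟩ := Subgroup.mem_zpowers_iff.mp g.2
    have hc : ((g : Equiv.Perm α)) ^ (p ^ 1) = 1 := by
      rw [pow_one, ← hn, ← zpow_natCast, ← zpow_mul, mul_comm, zpow_mul, zpow_natCast,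
        hf, one_zpow]
    exact Subtype.ext (by push_cast; simpa using hc)
  have hmod := hPG.card_modEq_card_fixedPoints α
  have hcard : Nat.card (MulAction.fixedPoints G α) = Nat.card {a : α // f a = a} := by
    apply Nat.card_congr
    apply Equiv.subtypeEquivRight
    intro a
    simp only [MulAction.mem_fixedPoints]
    constructor
    · intro h
      have := h ⟨f, Subgroup.mem_zpowers f⟩
      simpa using this
    · intro h g
      obtain ⟨n, hn⟩ := Subgroup.mem_zpowers_iff.mp g.2
      show (g : Equiv.Perm α) a = a
      rw [← hn]
      exact Equiv.Perm.zpow_apply_eq_self_of_apply_eq_self h n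
  rw [hcard] at hmod
  exact Int.natCast_modEq_iff.mpr hmod

/-- The key counting argument for a type (2) fixed substructure, in a self-dual
formulation. -/
lemma type2_aux {P L : Type*} [Finite P] [Finite L] {I : P → L → Prop} {s : ℕ}
    (σ : Equiv.Perm P) (τ : Equiv.Perm L)
    (pres : ∀ q ℓ, I (σ q) (τ ℓ) ↔ I q ℓ)
    (line_pts : ∀ ℓ, Nat.card {q : P // I q ℓ} = s + 1)
    (uline : ∀ a b : P, a ≠ b → Nat.card {ℓ : L // I a ℓ ∧ I b ℓ} ≤ 1)
    {p : ℕ} (hp : p.Prime) (hσ : σ ^ p = 1)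
    (P₀ : P) (hP₀ : σ P₀ = P₀) (hcol : ∀ q, σ q = q → ∃ ℓ, I P₀ ℓ ∧ I q ℓ)
    (hthrough : ∀ ℓ, τ ℓ = ℓ → I P₀ ℓ) (ℓ₁ : L) (hℓ₁ : τ ℓ₁ = ℓ₁) :
    (Nat.card {q : P // σ q = q} : ℤ) ≡
      1 + (s : ℤ) * (Nat.card {ℓ : L // τ ℓ = ℓ} : ℤ) [ZMOD (p : ℤ)] := by
  classical
  -- uniqueness of the fixed line through a fixed point ≠ P₀
  have huniq : ∀ q : P, q ≠ P₀ → ∀ ℓ m : L, τ ℓ = ℓ → τ m = m → I q ℓ → I q m → ℓ = m := by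
    intro q hq ℓ m hℓ hm hqℓ hqm
    have hsub : Subsingleton {n : L // I P₀ n ∧ I q n} :=
      Finite.card_le_one_iff_subsingleton.mp (uline P₀ q (Ne.symm hq))
    have := @Subsingleton.elim _ hsub ⟨ℓ, hthrough ℓ hℓ, hqℓ⟩ ⟨m, hthrough m hm, hqm⟩
    exact congrArg Subtype.val this
  -- the set of points lying on some fixed line
  set U := {q : P // ∃ ℓ, τ ℓ = ℓ ∧ I q ℓ} with hUdef
  have hUiff : ∀ q : P, (∃ ℓ, τ ℓ = ℓ ∧ I q ℓ) ↔ (∃ ℓ, τ ℓ = ℓ ∧ I (σ q) ℓ) := by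
    intro q
    constructor
    · rintro ⟨ℓ, hℓ, hqℓ⟩
      exact ⟨ℓ, hℓ, by rw [← hℓ]; exact (pres q ℓ).mpr hqℓ⟩
    · rintro ⟨ℓ, hℓ, hqℓ⟩
      refine ⟨ℓ, hℓ, ?_⟩
      rw [← hℓ] at hqℓ
      exact (pres q ℓ).mp hqℓ
  let f : Equiv.Perm U := Equiv.subtypeEquiv σ hUiff
  have hf_apply : ∀ u : U, (f u).1 = σ u.1 := fun u => rfl
  have hfpow : ∀ (n : ℕ) (u : U), ((f ^ n) u).1 = (σ ^ n) u.1 := by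
    intro n
    induction n with
    | zero => intro u; rfl
    | succ n ih =>
      intro u
      rw [pow_succ, pow_succ, Equiv.Perm.mul_apply, Equiv.Perm.mul_apply, ih, hf_apply]
  have hfp : f ^ p = 1 := by
    apply Equiv.ext
    intro u
    apply Subtype.ext
    rw [hfpow p u, hσ]
    rfl
  -- every fixed point lies on a fixed line
  have hmem : ∀ q : P, σ q = q → ∃ ℓ, τ ℓ = ℓ ∧ I q ℓ := by
    intro q hq
    by_cases hqP : q = P₀
    · exact ⟨ℓ₁, hℓ₁, hqP ▸ hthrough ℓ₁ hℓ₁⟩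
    · obtain ⟨ℓ, hPℓ, hqℓ⟩ := hcol q hq
      have hτℓ : τ ℓ = ℓ := by
        have h1 : I P₀ (τ ℓ) := by
          have := (pres P₀ ℓ).mpr hPℓ
          rwa [hP₀] at this
        have h2 : I q (τ ℓ) := by
          have := (pres q ℓ).mpr hqℓ
          rwa [hq] at this
        have hsub : Subsingleton {n : L // I P₀ n ∧ I q n} :=
          Finite.card_le_one_iff_subsingleton.mp (uline P₀ q (Ne.symm hqP))
        have := @Subsingleton.elim _ hsub ⟨τ ℓ, h1, h2⟩ ⟨ℓ, hPℓ, hqℓ⟩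
        exact congrArg Subtype.val this
      exact ⟨ℓ, hτℓ, hqℓ⟩
  -- the fixed points of f correspond to the fixed points of σ
  have e2 : {u : U // f u = u} ≃ {q : P // σ q = q} :=
    { toFun := fun u => ⟨u.1.1, congrArg Subtype.val u.2⟩
      invFun := fun q => ⟨⟨q.1, hmem q.1 q.2⟩, Subtype.ext q.2⟩
      left_inv := fun u => by apply Subtype.ext; apply Subtype.ext; rfl
      right_inv := fun q => rfl }
  -- counting U
  set FL := {ℓ : L // τ ℓ = ℓ} with hFLdef
  let Fib := fun (ℓ : FL) => {q : P // I q ℓ.1 ∧ q ≠ P₀}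
  let g : Option (Σ ℓ : FL, Fib ℓ) → U := fun o =>
    match o with
    | none => ⟨P₀, ℓ₁, hℓ₁, hthrough ℓ₁ hℓ₁⟩
    | some ⟨ℓ, q⟩ => ⟨q.1, ℓ.1, ℓ.2, q.2.1⟩
  have hg : Function.Bijective g := by
    constructor
    · rintro (_ | ⟨ℓ, q⟩) (_ | ⟨ℓ', q'⟩) hab
      · rfl
      · exact absurd (congrArg Subtype.val hab).symm q'.2.2
      · exact absurd (congrArg Subtype.val hab) q.2.2
      · have hq : q.1 = q'.1 := congrArg Subtype.val hab
        have hl : ℓ = ℓ' := Subtype.ext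
          (huniq q.1 q.2.2 ℓ.1 ℓ'.1 ℓ.2 ℓ'.2 q.2.1 (hq ▸ q'.2.1))
        subst hl
        have : q = q' := Subtype.ext hq
        subst this
        rfl
    · intro u
      obtain ⟨ℓ, hℓfix, huℓ⟩ := u.2
      by_cases h : u.1 = P₀
      · exact ⟨none, Subtype.ext h.symm⟩
      · exact ⟨some ⟨⟨ℓ, hℓfix⟩, ⟨u.1, huℓ, h⟩⟩, Subtype.ext rfl⟩
  have hfib : ∀ ℓ : FL, Nat.card (Fib ℓ) = s := by
    intro ℓ
    have h1 := line_pts ℓ.1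
    have h2 : Nat.card {q : P // I q ℓ.1} = Nat.card (Fib ℓ) + 1 :=
      card_subtype_succ (fun q => I q ℓ.1) P₀ (hthrough ℓ.1 ℓ.2)
    omega
  have hU : Nat.card U = s * Nat.card FL + 1 := by
    rw [← Nat.card_eq_of_bijective g hg, Finite.card_option]
    congr 1
    haveI := Fintype.ofFinite FL
    haveI : ∀ ℓ : FL, Fintype (Fib ℓ) := fun ℓ => Fintype.ofFinite _
    rw [Nat.card_eq_fintype_card, Fintype.card_sigma]
    have hfib' : ∀ ℓ : FL, Fintype.card (Fib ℓ) = s := by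
      intro ℓ
      rw [← Nat.card_eq_fintype_card]
      exact hfib ℓ
    rw [Nat.card_eq_fintype_card]
    simp [hfib', Finset.sum_const, mul_comm]
  have hmod := perm_card_fixed_modEq f p hp hfp
  rw [Nat.card_congr e2, hU] at hmod
  have := hmod.symm
  push_cast at this ⊢
  calc (Nat.card {q : P // σ q = q} : ℤ)
      ≡ (s : ℤ) * (Nat.card FL : ℤ) + 1 [ZMOD (p : ℤ)] := this
    _ = 1 + (s : ℤ) * (Nat.card {ℓ : L // τ ℓ = ℓ} : ℤ) := by rw [add_comm]

end AuxLemmas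

/-- For an automorphism x of prime order p of a GQ of order (s,t):
if the fixed substructure has type (2) then α₀(x) ≡ 1 + s·β₀(x) (mod p), and if
it has type (2') then β₀(x) ≡ 1 + t·α₀(x) (mod p). -/
theorem statement10 {P L : Type*} (I : P → L → Prop) (s t : ℕ)
    (hGQ : IsGQ I s t) (p : ℕ) (hp : p.Prime) (x : GQAut I) (hx : orderOf x = p) :
    (FixedType2 I x → (alpha0 x : ℤ) ≡ 1 + (s : ℤ) * (beta0 x : ℤ) [ZMOD (p : ℤ)]) ∧
    (FixedType2' I x → (beta0 x : ℤ) ≡ 1 + (t : ℤ) * (alpha0 x : ℤ) [ZMOD (p : ℤ)]) := by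
  haveI := hGQ.finP
  haveI := hGQ.finL
  have hxp : x ^ p = 1 := by rw [← hx]; exact pow_orderOf_eq_one x
  have hσ : x.permP ^ p = 1 := by rw [← GQAut.permP_pow_s10, hxp]; rfl
  have hτ : x.permL ^ p = 1 := by rw [← GQAut.permL_pow_s10, hxp]; rfl
  -- the dual of unique_line : two distinct lines meet in at most one point
  have uline' : ∀ ℓ m : L, ℓ ≠ m → Nat.card {q : P // I q ℓ ∧ I q m} ≤ 1 := by
    intro ℓ m hlm
    rw [Finite.card_le_one_iff_subsingleton]
    constructor
    rintro ⟨q1, hq1⟩ ⟨q2, hq2⟩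
    apply Subtype.ext
    by_contra hne
    have hsub : Subsingleton {n : L // I q1 n ∧ I q2 n} :=
      Finite.card_le_one_iff_subsingleton.mp (hGQ.unique_line q1 q2 hne)
    have := @Subsingleton.elim _ hsub ⟨ℓ, hq1.1, hq2.1⟩ ⟨m, hq1.2, hq2.2⟩
    exact hlm (congrArg Subtype.val this)
  constructor
  · rintro ⟨P₀, hP₀, hcol, ⟨ℓ₁, hℓ₁⟩, hthrough⟩
    exact type2_aux x.permP x.permL x.pres hGQ.line_pts hGQ.unique_line hp hσ
      P₀ hP₀ (fun q hq => hcol q hq) hthrough ℓ₁ hℓ₁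
  · rintro ⟨ℓ₀, hℓ₀, hconc, ⟨p₁, hp₁⟩, hon⟩
    exact type2_aux (I := fun (ℓ : L) (q : P) => I q ℓ) x.permL x.permP
      (fun ℓ q => x.pres q ℓ) hGQ.pt_lines uline' hp hτ
      ℓ₀ hℓ₀ (fun ℓ hℓ => hconc ℓ hℓ) hon p₁ hp₁
end
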